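/- Let f satisfy (H1)-(H3), p_u a stable steady state, and (c_n) a decreasing sequence converging to c. Let q, p_l and q_n, p_{l,n} be the trajectories and terminal points at speeds c, c_n. Then p_{l,n} → p_l, q_n → q locally uniformly on (p_l, p_u), and q_n(p_{l,n}) → q(p_l). -/

import Mathlib

open Set Filter Topology

/-- The set of stable steady states `θ (2*i)`, `0 ≤ i ≤ I`. -/
def StablePts (I : ℕ) (θ : ℕ → ℝ) : Set ℝ := {x | ∃ i ≤ I, x = θ (2 * i)}

/-- Hypothesis (H1): finitely many ordered steady states with alternating signs of `f`. -/
def H1 (f : ℝ → ℝ) (I : ℕ) (θ : ℕ → ℝ) : Prop :=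
  0 < I ∧ θ 0 = 1 ∧ θ (2 * I) = 0 ∧
  (∀ i j : ℕ, i < j → j ≤ 2 * I → θ j < θ i) ∧
  (∀ u : ℝ, u < 0 → 0 < f u) ∧
  (∀ i < I, ∀ u : ℝ, θ (2 * i + 1) < u → u < θ (2 * i) → 0 < f u) ∧
  (∀ u : ℝ, 1 < u → f u < 0) ∧
  (∀ i : ℕ, 1 ≤ i → i ≤ I → ∀ u : ℝ, θ (2 * i) < u → u < θ (2 * i - 1) → f u < 0)

/-- Hypothesis (H2): `f` is `C¹` and Lipschitz away from the stable steady states. -/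
def H2 (f : ℝ → ℝ) (I : ℕ) (θ : ℕ → ℝ) : Prop :=
  ∀ x ∉ StablePts I θ, ∃ ε > 0, ContDiffOn ℝ 1 f (Metric.ball x ε) ∧
    ∃ K : NNReal, LipschitzOnWith K f (Metric.ball x ε)

/-- Hypothesis (H3): jump discontinuities at the stable states, positive left limit and
negative right limit. -/
def H3 (f : ℝ → ℝ) (I : ℕ) (θ : ℕ → ℝ) : Prop :=
  ∀ i ≤ I, ∃ Lm Lp : ℝ, 0 < Lm ∧ Lp < 0 ∧
    Tendsto f (𝓝[<] θ (2 * i)) (𝓝 Lm) ∧ Tendsto f (𝓝[>] θ (2 * i)) (𝓝 Lp)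

/-- The phase-plane trajectory from Proposition 3.2: `q` is continuous on `[pl, pu]`,
vanishes at `pu`, is negative in between, solves `dq/dp = -c - f p / q p` away from the
discontinuity points of `f`, and terminates on one of the two axes. -/
def Traj (f : ℝ → ℝ) (I : ℕ) (θ : ℕ → ℝ) (c pu pl : ℝ) (q : ℝ → ℝ) : Prop :=
  pl ∈ Ico (0 : ℝ) pu ∧ ContinuousOn q (Icc pl pu) ∧ q pu = 0 ∧
  (∀ p ∈ Ioo pl pu, q p < 0) ∧
  (∀ p ∈ Ioo pl pu, p ∉ StablePts I θ → HasDerivAt q (-c - f p / q p) p) ∧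
  (0 < pl → q pl = 0) ∧ (pl = 0 → q 0 ≤ 0)

/-- A traveling wave solution: a `C¹` profile satisfying `φ'' + c φ' + f (φ) = 0`
classically wherever `φ` avoids the stable steady states. -/
def IsTW (f : ℝ → ℝ) (I : ℕ) (θ : ℕ → ℝ) (c : ℝ) (φ : ℝ → ℝ) : Prop :=
  ContDiff ℝ 1 φ ∧
  ∀ z : ℝ, φ z ∉ StablePts I θ →
    HasDerivAt (deriv φ) (-(c * deriv φ z) - f (φ z)) z

/-- `φ` monotonically connects `b` (at `-∞`) and `a` (at `+∞`). -/
def ConnectsMono (φ : ℝ → ℝ) (b a : ℝ) : Prop :=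
  Antitone φ ∧ Tendsto φ atBot (𝓝 b) ∧ Tendsto φ atTop (𝓝 a)

/-- A traveling wave is connected if the support of `φ'` is an interval. -/
def ConnectedTW (φ : ℝ → ℝ) : Prop := OrdConnected {z : ℝ | deriv φ z ≠ 0}

/-- A traveling wave is compact if the closure of the support of `φ'` is compact. -/
def CompactTW (φ : ℝ → ℝ) : Prop := IsCompact (closure {z : ℝ | deriv φ z ≠ 0})

/-- A propagating terrace connecting 1 and 0. -/
def IsTerrace (f : ℝ → ℝ) (I : ℕ) (θ : ℕ → ℝ) (J : ℕ)
    (φ : ℕ → ℝ → ℝ) (c : ℕ → ℝ) (plat : ℕ → ℝ) : Prop :=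
  0 < J ∧ plat 0 = 1 ∧ plat J = 0 ∧
  (∀ j < J, plat (j + 1) < plat j) ∧
  (∀ j ≤ J, plat j ∈ StablePts I θ) ∧
  (∀ j : ℕ, j + 1 < J → c j ≤ c (j + 1)) ∧
  ∀ j < J, IsTW f I θ (c j) (φ j) ∧
    ConnectsMono (φ j) (plat j) (plat (j + 1)) ∧ ConnectedTW (φ j)

open MeasureTheory

/-- Monotonicity from nonnegative derivative off a finite exceptional set. -/
lemma monotoneOn_of_finite_exceptions {S : Set ℝ} (hS : S.Finite) :
    ∀ (a b : ℝ) (E e : ℝ → ℝ), ContinuousOn E (Icc a b) →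
    (∀ x ∈ Ioo a b, x ∉ S → HasDerivAt E (e x) x) →
    (∀ x ∈ Ioo a b, x ∉ S → 0 ≤ e x) → MonotoneOn E (Icc a b) := by
  refine Set.Finite.induction_on (motive := fun S _ => ∀ (a b : ℝ) (E e : ℝ → ℝ), ContinuousOn E (Icc a b) →
      (∀ x ∈ Ioo a b, x ∉ S → HasDerivAt E (e x) x) →
      (∀ x ∈ Ioo a b, x ∉ S → 0 ≤ e x) → MonotoneOn E (Icc a b)) S hS ?_ ?_
  ·
    intro a b E e hc hd he
    apply monotoneOn_of_hasDerivWithinAt_nonneg (convex_Icc a b) hc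
      (f' := e)
    · intro x hx
      rw [interior_Icc] at hx
      exact ((hd x hx (by simp)).hasDerivWithinAt)
    · intro x hx
      rw [interior_Icc] at hx
      exact he x hx (by simp)
  · intro s S' hsnot hfin IH
    intro a b E e hc hd he
    by_cases hmem : s ∈ Ioo a b
    · have h1 : MonotoneOn E (Icc a s) := by
        refine IH a s E e (hc.mono (Icc_subset_Icc le_rfl hmem.2.le)) ?_ ?_
        · intro x hx hxS
          exact hd x ⟨hx.1, hx.2.trans hmem.2⟩ (by simp [hxS, ne_of_lt hx.2])
        · intro x hx hxS
          exact he x ⟨hx.1, hx.2.trans hmem.2⟩ (by simp [hxS, ne_of_lt hx.2])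
      have h2 : MonotoneOn E (Icc s b) := by
        refine IH s b E e (hc.mono (Icc_subset_Icc hmem.1.le le_rfl)) ?_ ?_
        · intro x hx hxS
          exact hd x ⟨hmem.1.trans hx.1, hx.2⟩ (by simp [hxS, (ne_of_gt hx.1)])
        · intro x hx hxS
          exact he x ⟨hmem.1.trans hx.1, hx.2⟩ (by simp [hxS, (ne_of_gt hx.1)])
      intro x hx y hy hxy
      rcases le_total y s with h | h
      · exact h1 ⟨hx.1, hxy.trans h⟩ ⟨hy.1, h⟩ hxy
      · rcases le_total x s with h' | h'
        · calc E x ≤ E s := h1 ⟨hx.1, h'⟩ ⟨hmem.1.le, le_rfl⟩ h'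
            _ ≤ E y := h2 ⟨le_rfl, hmem.2.le⟩ ⟨h, hy.2⟩ h
        · exact h2 ⟨h', hx.2⟩ ⟨h'.trans hxy, hy.2⟩ hxy
    · refine IH a b E e hc ?_ ?_
      · intro x hx hxS
        exact hd x hx (by simp [hxS]; rintro rfl; exact hmem hx)
      · intro x hx hxS
        exact he x hx (by simp [hxS]; rintro rfl; exact hmem hx)

lemma stablePts_finite (I : ℕ) (θ : ℕ → ℝ) : (StablePts I θ).Finite := by
  apply ((Set.finite_Iic I).image (fun i => θ (2 * i))).subset
  rintro x ⟨i, hi, rfl⟩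
  exact ⟨i, hi, rfl⟩

lemma traj_nonpos {f : ℝ → ℝ} {I : ℕ} {θ : ℕ → ℝ} {c pu pl : ℝ} {q : ℝ → ℝ}
    (h : Traj f I θ c pu pl q) : ∀ p ∈ Icc pl pu, q p ≤ 0 := by
  obtain ⟨hpl, _, hqpu, hneg, _, hpl1, hpl2⟩ := h
  intro p hp
  rcases eq_or_lt_of_le hp.2 with rfl | h2
  · exact le_of_eq hqpu
  rcases eq_or_lt_of_le hp.1 with rfl | h1
  · rcases eq_or_lt_of_le hpl.1 with h0 | h0
    · rw [← h0]; exact hpl2 h0.symm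
    · exact le_of_eq (hpl1 h0)
  · exact (hneg p ⟨h1, h2⟩).le

lemma traj_Q_deriv {f : ℝ → ℝ} {I : ℕ} {θ : ℕ → ℝ} {c pu pl : ℝ} {q : ℝ → ℝ}
    (h : Traj f I θ c pu pl q) {p : ℝ} (hp : p ∈ Ioo pl pu) (hps : p ∉ StablePts I θ) :
    HasDerivAt (fun x => q x * q x) (-2 * c * q p - 2 * f p) p := by
  have hq := h.2.2.2.2.1 p hp hps
  have hne : q p ≠ 0 := (h.2.2.2.1 p hp).ne
  have := hq.mul hq
  refine this.congr_deriv ?_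
  field_simp
  ring

lemma exp_sub_one_le {x : ℝ} (hx : 0 ≤ x) : Real.exp x - 1 ≤ x * Real.exp x := by
  have h := Real.add_one_le_exp (-x)
  rw [Real.exp_neg] at h
  have hp := Real.exp_pos x
  have h1 : (1 - x) * Real.exp x ≤ 1 := by
    rw [sub_mul]
    have : (Real.exp x)⁻¹ * Real.exp x = 1 := inv_mul_cancel₀ hp.ne'
    nlinarith
  nlinarith

lemma abs_le_of_close {a b ε : ℝ} (h : |a - b| < ε) : |a| ≤ |b| + ε := by
  have h1 : |a| - |b| ≤ |a - b| := abs_sub_abs_le_abs_sub a b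
  linarith

lemma f_bounded {f : ℝ → ℝ} {I : ℕ} {θ : ℕ → ℝ} (h2 : H2 f I θ) (h3 : H3 f I θ) (pu : ℝ) :
    ∃ F₀ : ℝ, 0 ≤ F₀ ∧ ∀ x ∈ Icc (0:ℝ) pu, x ∉ StablePts I θ → |f x| ≤ F₀ := by
  have key : ∀ x ∈ Icc (0:ℝ) pu, ∃ U : Set ℝ, U ∈ 𝓝 x ∧ ∃ M : ℝ,
      ∀ y ∈ U, y ∉ StablePts I θ → |f y| ≤ M := by
    intro x _
    by_cases hx : x ∈ StablePts I θ
    · obtain ⟨i, hi, rfl⟩ := hx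
      obtain ⟨Lm, Lp, _, _, hLm, hLp⟩ := h3 i hi
      set x := θ (2 * i)
      have hl : ∀ᶠ y in 𝓝[<] x, |f y| ≤ |Lm| + 1 := by
        filter_upwards [hLm.eventually (eventually_abs_sub_lt Lm one_pos)] with y hy
        exact (abs_le_of_close hy).trans (by linarith)
      have hr : ∀ᶠ y in 𝓝[>] x, |f y| ≤ |Lp| + 1 := by
        filter_upwards [hLp.eventually (eventually_abs_sub_lt Lp one_pos)] with y hy
        exact (abs_le_of_close hy).trans (by linarith)
      obtain ⟨l, hl1, hl2⟩ := (mem_nhdsLT_iff_exists_Ioo_subset).1 hl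
      obtain ⟨r, hr1, hr2⟩ := (mem_nhdsGT_iff_exists_Ioo_subset).1 hr
      refine ⟨Ioo l r, Ioo_mem_nhds hl1 hr1, max (|Lm| + 1) (|Lp| + 1), ?_⟩
      intro y hy hyS
      rcases lt_trichotomy y x with h | h | h
      · exact le_trans (hl2 ⟨hy.1, h⟩) (le_max_left _ _)
      · exact absurd (h ▸ ⟨i, hi, rfl⟩) hyS
      · exact le_trans (hr2 ⟨h, hy.2⟩) (le_max_right _ _)
    · obtain ⟨ε, hε, hcd, _⟩ := h2 x hx
      have hco : ContinuousAt f x :=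
        (hcd.continuousOn.continuousAt (Metric.ball_mem_nhds x hε))
      have : ∀ᶠ y in 𝓝 x, |f y| ≤ |f x| + 1 := by
        filter_upwards [hco.eventually (eventually_abs_sub_lt (f x) one_pos)] with y hy
        exact (abs_le_of_close hy).trans (by linarith)
      exact ⟨_, this, |f x| + 1, fun y hy _ => hy⟩
  choose! U hU M hM using key
  obtain ⟨t, htmem, ht⟩ := (isCompact_Icc (a := (0:ℝ)) (b := pu)).elim_nhds_subcover U
    (fun x hx => hU x hx)
  refine ⟨∑ x ∈ t, |M x|, Finset.sum_nonneg (fun _ _ => abs_nonneg _), ?_⟩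
  intro y hy hyS
  obtain ⟨x, hxt, hyU⟩ := Set.mem_iUnion₂.1 (ht hy)
  calc |f y| ≤ M x := hM x (htmem x hxt) y hyU hyS
    _ ≤ |M x| := le_abs_self _
    _ ≤ ∑ x ∈ t, |M x| := Finset.single_le_sum (f := fun x => |M x|) (fun _ _ => abs_nonneg _) hxt

/-- Lemma B: self bound for the square of a trajectory. -/
lemma traj_sq_bound {f : ℝ → ℝ} {I : ℕ} {θ : ℕ → ℝ} {c' pu pl : ℝ} {q : ℝ → ℝ}
    (htraj : Traj f I θ c' pu pl q) {F₀ C : ℝ} (hC : |c'| ≤ C) (hF₀ : 0 ≤ F₀)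
    (hF : ∀ x ∈ Icc (0:ℝ) pu, x ∉ StablePts I θ → |f x| ≤ F₀) :
    ∀ p ∈ Icc pl pu, q p * q p ≤ ((C^2 + 2*F₀) * Real.exp pu) * (pu - p) := by
  have hC0 : 0 ≤ C := (abs_nonneg c').trans hC
  set k : ℝ := C^2 + 2*F₀ with hk
  have hk0 : 0 ≤ k := by positivity
  have hpl0 : 0 ≤ pl := htraj.1.1
  set W : ℝ → ℝ := fun p => Real.exp p * (q p * q p + k) with hW
  have hmono : MonotoneOn W (Icc pl pu) := by
    apply monotoneOn_of_finite_exceptions (stablePts_finite I θ) pl pu W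
      (fun x => Real.exp x * (q x * q x + k) + Real.exp x * (-2 * c' * q x - 2 * f x))
    · exact (Real.continuous_exp.continuousOn).mul
        (((htraj.2.1).mul htraj.2.1).add continuousOn_const)
    · intro x hx hxS
      exact (Real.hasDerivAt_exp x).mul ((traj_Q_deriv htraj hx hxS).add_const k)
    · intro x hx hxS
      have hfb : |f x| ≤ F₀ := hF x ⟨hpl0.trans hx.1.le, hx.2.le⟩ hxS
      have h1 : |2 * c' * q x| ≤ 2 * C * |q x| := by
        rw [abs_mul, abs_mul]
        have : |(2:ℝ)| = 2 := by norm_num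
        rw [this]
        gcongr
      have h2 : -2 * c' * q x ≥ -(2 * C * |q x|) := by
        linarith [le_abs_self (2 * c' * q x), h1]
      have h3 : 2 * C * |q x| ≤ C^2 + q x * q x := by
        nlinarith [sq_nonneg (C - |q x|), abs_nonneg (q x), sq_abs (q x)]
      have h4 : -2 * f x ≥ -2 * F₀ := by
        have := neg_abs_le (f x); nlinarith [le_abs_self (f x)]
      have := Real.exp_pos x
      nlinarith [Real.exp_pos x]
  intro p hp
  have hWle : W p ≤ W pu := hmono hp ⟨htraj.1.2.le, le_rfl⟩ hp.2
  have hqpu : q pu = 0 := htraj.2.2.1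
  rw [hW] at hWle
  simp only [hqpu] at hWle
  -- W p ≤ exp pu * k
  have hep : 0 < Real.exp p := Real.exp_pos p
  have h5 : q p * q p + k ≤ Real.exp (pu - p) * k := by
    rw [Real.exp_sub]
    rw [div_mul_eq_mul_div, le_div_iff₀ hep]
    nlinarith
  have hx0 : 0 ≤ pu - p := by linarith [hp.2]
  have h6 : Real.exp (pu - p) - 1 ≤ (pu - p) * Real.exp (pu - p) := exp_sub_one_le hx0
  have h7 : Real.exp (pu - p) ≤ Real.exp pu := by
    apply Real.exp_le_exp.2; linarith [hpl0.trans hp.1]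
  have h8 : q p * q p ≤ k * (Real.exp (pu - p) - 1) := by nlinarith
  have h9 : k * (Real.exp (pu - p) - 1) ≤ k * ((pu - p) * Real.exp (pu - p)) :=
    mul_le_mul_of_nonneg_left h6 hk0
  have h10 : k * ((pu - p) * Real.exp (pu - p)) ≤ k * ((pu - p) * Real.exp pu) := by
    gcongr
  nlinarith [h8, h9, h10]

/-- Extraction of a good left neighborhood of `pu`. -/
lemma near_pu_delta {f : ℝ → ℝ} {I : ℕ} {θ : ℕ → ℝ} (h3 : H3 f I θ) {pu : ℝ}
    (hpu : pu ∈ StablePts I θ) :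
    ∃ Lm : ℝ, 0 < Lm ∧ ∀ η > 0, ∃ δ > 0, δ ≤ η ∧
      (∀ s ∈ StablePts I θ, s ∉ Ioo (pu - δ) pu) ∧
      (∀ p ∈ Ioo (pu - δ) pu, Lm / 2 ≤ f p) := by
  obtain ⟨i, hi, hpui⟩ := hpu
  obtain ⟨Lm, Lp, hLm0, _, hLm, _⟩ := h3 i hi
  refine ⟨Lm, hLm0, ?_⟩
  intro η hη
  have ev1 : ∀ᶠ p in 𝓝[<] pu, Lm / 2 ≤ f p := by
    rw [hpui]
    filter_upwards [hLm.eventually (eventually_ge_nhds (by linarith : Lm / 2 < Lm))] with y hy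
    exact hy
  have ev2 : ∀ᶠ p in 𝓝[<] pu, p ∉ StablePts I θ := by
    have hcl : IsClosed (StablePts I θ \ {pu}) := Set.Finite.isClosed ((stablePts_finite I θ).diff (t := {pu}))
    have hopen : (StablePts I θ \ {pu})ᶜ ∈ 𝓝 pu := by
      apply hcl.isOpen_compl.mem_nhds
      simp
    have h1 : ∀ᶠ p in 𝓝[<] pu, p ∉ StablePts I θ \ {pu} :=
      eventually_nhdsWithin_of_eventually_nhds hopen
    filter_upwards [h1, self_mem_nhdsWithin] with p hp1 hp2
    intro hpS
    exact hp1 ⟨hpS, ne_of_lt hp2⟩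
  obtain ⟨l, hl1, hl2⟩ := mem_nhdsLT_iff_exists_Ioo_subset.1 (ev1.and ev2)
  have hlpu : l < pu := hl1
  refine ⟨min η ((pu - l) / 2), lt_min hη (by linarith), min_le_left _ _, ?_, ?_⟩
  · intro s hs hsI
    have : s ∈ Ioo l pu := ⟨by have := hsI.1; have := min_le_right η ((pu - l)/2); simp at hl1 ⊢; linarith, hsI.2⟩
    exact (hl2 this).2 hs
  · intro p hp
    have : p ∈ Ioo l pu := ⟨by have := hp.1; have := min_le_right η ((pu - l)/2); simp at hl1 ⊢; linarith, hp.2⟩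
    exact (hl2 this).1

/-- Lemma C/C': trajectories cannot terminate close to `pu`, and near `pu` the square
of the trajectory is bounded below linearly. -/
lemma traj_near_pu {f : ℝ → ℝ} {I : ℕ} {θ : ℕ → ℝ} {c' pu pl : ℝ} {q : ℝ → ℝ}
    (htraj : Traj f I θ c' pu pl q) {C Lm δ : ℝ} (hC : |c'| ≤ C) (hLm0 : 0 < Lm)
    (hδ0 : 0 < δ) (hδpu : δ ≤ pu)
    (hS : ∀ s ∈ StablePts I θ, s ∉ Ioo (pu - δ) pu)
    (hfLm : ∀ p ∈ Ioo (pu - δ) pu, Lm / 2 ≤ f p)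
    (hsmall : ∀ p ∈ Ioo (pu - δ) pu, p ∈ Icc pl pu →
      q p * q p ≤ (Lm / (4 * (C + 1)))^2) :
    pl ≤ pu - δ ∧ ∀ p ∈ Icc (pu - δ) pu, Lm / 2 * (pu - p) ≤ q p * q p := by
  have hC0 : 0 ≤ C := (abs_nonneg c').trans hC
  have hpl0 : 0 ≤ pl := htraj.1.1
  have hplpu : pl < pu := htraj.1.2
  set ε₀ : ℝ := Lm / (4 * (C + 1)) with hε₀
  have hε₀pos : 0 < ε₀ := by positivity
  -- the antitone function V on [max pl (pu - δ), pu]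
  set m : ℝ := max pl (pu - δ) with hm
  have hmpu : m < pu := max_lt hplpu (by linarith)
  have hanti : MonotoneOn (fun p => -(q p * q p + Lm / 2 * p)) (Icc m pu) := by
    apply monotoneOn_of_finite_exceptions (stablePts_finite I θ) m pu _
      (fun x => -((-2 * c' * q x - 2 * f x) + Lm / 2))
    · apply ContinuousOn.neg
      apply ContinuousOn.add
      · exact ((htraj.2.1).mono (Icc_subset_Icc (le_max_left _ _) le_rfl)).mul
          ((htraj.2.1).mono (Icc_subset_Icc (le_max_left _ _) le_rfl))
      · exact (continuous_const.mul continuous_id).continuousOn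
    · intro x hx hxS
      have hx' : x ∈ Ioo pl pu := ⟨lt_of_le_of_lt (le_max_left _ _) hx.1, hx.2⟩
      exact ((traj_Q_deriv htraj hx' hxS).add
        ((hasDerivAt_id x).const_mul (Lm / 2))).neg.congr_deriv (by ring)
    · intro x hx hxS
      have hxIoo : x ∈ Ioo (pu - δ) pu := ⟨lt_of_le_of_lt (le_max_right _ _) hx.1, hx.2⟩
      have hx' : x ∈ Ioo pl pu := ⟨lt_of_le_of_lt (le_max_left _ _) hx.1, hx.2⟩
      have hq2 : q x * q x ≤ ε₀^2 := hsmall x hxIoo ⟨hx'.1.le, hx'.2.le⟩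
      have hqabs : |q x| ≤ ε₀ := by
        nlinarith [sq_abs (q x), abs_nonneg (q x)]
      have hfx : Lm / 2 ≤ f x := hfLm x hxIoo
      have h1 : |2 * c' * q x| ≤ 2 * C * ε₀ := by
        rw [abs_mul, abs_mul]
        have h2 : |(2:ℝ)| = 2 := by norm_num
        rw [h2]
        have := abs_nonneg c'
        nlinarith
      have h2 : 2 * C * ε₀ ≤ Lm / 2 := by
        rw [hε₀, ← mul_div_assoc, div_le_div_iff₀ (by positivity) (by norm_num : (0:ℝ) < 2)]
        nlinarith
      have h3 : -2 * c' * q x ≤ 2 * C * ε₀ := by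
        have := neg_abs_le (2 * c' * q x)
        have := le_abs_self (2 * c' * q x)
        linarith [abs_nonneg (2 * c' * q x)]
      linarith
  have key : ∀ p ∈ Icc m pu, Lm / 2 * (pu - p) ≤ q p * q p := by
    intro p hp
    have := hanti hp ⟨le_of_lt hmpu, le_rfl⟩ hp.2
    have hqpu : q pu = 0 := htraj.2.2.1
    simp only [hqpu] at this
    nlinarith [this]
  have hpl_le : pl ≤ pu - δ := by
    by_contra hcon
    push_neg at hcon
    have hm' : m = pl := max_eq_left (by linarith)
    have hplpos : 0 < pl := by linarith
    have hq0 : q pl = 0 := htraj.2.2.2.2.2.1 hplpos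
    have := key pl ⟨hm' ▸ le_rfl, hplpu.le⟩
    rw [hq0] at this
    nlinarith
  refine ⟨hpl_le, ?_⟩
  intro p hp
  apply key
  exact ⟨by rw [hm, max_eq_right hpl_le]; exact hp.1, hp.2⟩

set_option maxHeartbeats 1000000 in
/-- Key comparison lemma: for a second trajectory at higher speed, its square lies below,
with a quantitative bound proportional to the speed difference. -/
lemma key_comparison {f : ℝ → ℝ} {I : ℕ} {θ : ℕ → ℝ} {c pu pl : ℝ} {q : ℝ → ℝ}
    (htraj : Traj f I θ c pu pl q) {Lm δ a : ℝ} (hLm0 : 0 < Lm) (hδ0 : 0 < δ)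
    (hδpu : pl < pu - δ)
    (hQlow : ∀ p ∈ Icc (pu - δ) pu, Lm / 2 * (pu - p) ≤ q p * q p)
    (ha1 : pl ≤ a) (ha2 : a ≤ pu - δ)
    (hqa : ∀ p ∈ Icc a (pu - δ), q p < 0)
    {Mq : ℝ} (hMq0 : 0 ≤ Mq) :
    ∃ M : ℝ, 0 ≤ M ∧ ∀ (c2 pl2 : ℝ) (q2 : ℝ → ℝ), Traj f I θ c2 pu pl2 q2 → c ≤ c2 →
      (∀ p ∈ Icc pl2 pu, -q2 p ≤ Mq) →
      ∀ p0, a ≤ p0 → pl2 ≤ p0 → p0 < pu →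
      ∀ p ∈ Icc p0 pu, q2 p * q2 p ≤ q p * q p ∧
        q p * q p - q2 p * q2 p ≤ M * (c2 - c) := by
  have hpl0 : 0 ≤ pl := htraj.1.1
  have hplpu : pl < pu := htraj.1.2
  have hqnp : ∀ p ∈ Icc pl pu, q p ≤ 0 := traj_nonpos htraj
  have hapu : a < pu := lt_of_le_of_lt ha2 (by linarith)
  have ha0 : 0 ≤ a := hpl0.trans ha1
  -- minimum of -q on [a, pu - δ]
  obtain ⟨x₀, hx₀, hmin⟩ := isCompact_Icc.exists_isMinOn (nonempty_Icc.2 ha2)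
    ((htraj.2.1.mono (Icc_subset_Icc ha1 (by linarith))).neg)
  set m₀ : ℝ := -q x₀ with hm₀
  have hm₀pos : 0 < m₀ := by
    have := hqa x₀ hx₀
    simp only [hm₀]; linarith
  -- strict negativity of q on [a, pu)
  have hqneg : ∀ t ∈ Ico a pu, q t < 0 := by
    intro t ht
    rcases le_or_gt t (pu - δ) with h | h
    · exact hqa t ⟨ht.1, h⟩
    · have h1 := hQlow t ⟨h.le, ht.2.le⟩
      have h2 : 0 < Lm / 2 * (pu - t) := by
        apply mul_pos (by linarith) (by linarith [ht.2])
      have h3 : q t ≤ 0 := hqnp t ⟨ha1.trans ht.1, ht.2.le⟩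
      rcases lt_or_eq_of_le h3 with h4 | h4
      · exact h4
      · rw [h4] at h1; nlinarith
  -- the comparison weight function
  set hfun : ℝ → ℝ := fun t => 2 * |c| / m₀ +
    (2 * |c| / Real.sqrt (Lm / 2)) * (pu - t) ^ (-(1:ℝ)/2) with hhfun
  have hsqLm : 0 < Real.sqrt (Lm / 2) := Real.sqrt_pos.2 (by linarith)
  have hfun_nonneg : ∀ t ∈ Ico a pu, 0 ≤ hfun t := by
    intro t ht
    have h1 : (0:ℝ) ≤ (pu - t) ^ (-(1:ℝ)/2) := Real.rpow_nonneg (by linarith [ht.2]) _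
    have h2 : (0:ℝ) ≤ 2 * |c| / m₀ := by positivity
    have h3 : (0:ℝ) ≤ 2 * |c| / Real.sqrt (Lm / 2) := by positivity
    have h4 := mul_nonneg h3 h1
    rw [hhfun]; dsimp only; linarith
  -- pointwise bound  2|c|/(-q t) ≤ hfun t  on [a, pu)
  have hfun_bound : ∀ t ∈ Ico a pu, 2 * |c| / (-q t) ≤ hfun t := by
    intro t ht
    have hqt : 0 < -q t := by linarith [hqneg t ht]
    rcases le_or_gt t (pu - δ) with h | h
    · have h1 : m₀ ≤ -q t := hmin ⟨ht.1, h⟩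
      have h2 : 2 * |c| / (-q t) ≤ 2 * |c| / m₀ :=
        div_le_div_of_nonneg_left (by positivity) hm₀pos h1
      have h3 : (0:ℝ) ≤ (2 * |c| / Real.sqrt (Lm / 2)) * (pu - t) ^ (-(1:ℝ)/2) := by
        have := Real.rpow_nonneg (by linarith [ht.2] : (0:ℝ) ≤ pu - t) (-(1:ℝ)/2)
        positivity
      rw [hhfun]; dsimp only; linarith
    · have h1 := hQlow t ⟨h.le, ht.2.le⟩
      have hput : 0 < pu - t := by linarith [ht.2]
      have h2 : Real.sqrt (Lm / 2 * (pu - t)) ≤ -q t := by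
        have h3 : Real.sqrt (Lm / 2 * (pu - t)) ≤ Real.sqrt ((-q t) * (-q t)) := by
          apply Real.sqrt_le_sqrt; nlinarith
        rwa [Real.sqrt_mul_self hqt.le] at h3
      have hsq : 0 < Real.sqrt (Lm / 2 * (pu - t)) := Real.sqrt_pos.2 (by positivity)
      have h4 : 2 * |c| / (-q t) ≤ 2 * |c| / Real.sqrt (Lm / 2 * (pu - t)) :=
        div_le_div_of_nonneg_left (by positivity) hsq h2
      have h5 : Real.sqrt (Lm / 2 * (pu - t)) = Real.sqrt (Lm / 2) * Real.sqrt (pu - t) :=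
        Real.sqrt_mul (by linarith) _
      have h6 : Real.sqrt (pu - t) = (pu - t) ^ ((1:ℝ)/2) := by rw [Real.sqrt_eq_rpow]
      have h7 : (pu - t) ^ (-(1:ℝ)/2) = ((pu - t) ^ ((1:ℝ)/2))⁻¹ := by
        rw [← Real.rpow_neg hput.le]; norm_num
      have h8 : 2 * |c| / Real.sqrt (Lm / 2 * (pu - t)) =
          (2 * |c| / Real.sqrt (Lm / 2)) * (pu - t) ^ (-(1:ℝ)/2) := by
        rw [h5, h7, ← h6]
        field_simp
      have h9 : (0:ℝ) ≤ 2 * |c| / m₀ := by positivity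
      rw [hhfun]; dsimp only; linarith [h4.trans_eq h8]
  -- integrability of hfun on [a, pu]
  have hfun_int : IntervalIntegrable hfun volume a pu := by
    apply IntervalIntegrable.add
    · exact intervalIntegrable_const
    · apply IntervalIntegrable.const_mul
      have h1 : IntervalIntegrable (fun x : ℝ => x ^ (-(1:ℝ)/2)) volume 0 (pu - a) :=
        intervalIntegral.intervalIntegrable_rpow' (by norm_num)
      have h2 := h1.comp_sub_left pu
      simpa using h2.symm
  set A₀ : ℝ := ∫ t in a..pu, hfun t with hA₀
  have hfun_nn' : ∀ u ∈ Icc a pu, 0 ≤ hfun u := by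
    intro u hu
    have h1 : (0:ℝ) ≤ (pu - u) ^ (-(1:ℝ)/2) := Real.rpow_nonneg (by linarith [hu.2]) _
    have h2 : (0:ℝ) ≤ 2 * |c| / m₀ := by positivity
    have h3 : (0:ℝ) ≤ 2 * |c| / Real.sqrt (Lm / 2) := by positivity
    have h4 := mul_nonneg h3 h1
    rw [hhfun]; dsimp only; linarith
  have hA₀nn : 0 ≤ A₀ := intervalIntegral.integral_nonneg hapu.le hfun_nn' 
  have hpu00 : 0 ≤ pu := ha0.trans hapu.le
  refine ⟨2 * Mq * Real.exp A₀ * Real.exp A₀ * pu,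
    mul_nonneg (by positivity) hpu00, ?_⟩
  intro c2 pl2 q2 htraj2 hcc hMq p0 hap0 hpl2p0 hp0pu
  have hq2np : ∀ p ∈ Icc pl2 pu, q2 p ≤ 0 := traj_nonpos htraj2
  -- the denominator s
  set s : ℝ → ℝ := fun t => -q2 t - q t with hs
  have hscont : ContinuousOn s (Icc p0 pu) :=
    ((htraj2.2.1.mono (Icc_subset_Icc hpl2p0 le_rfl)).neg).sub
      (htraj.2.1.mono (Icc_subset_Icc (ha1.trans hap0) le_rfl))
  have hspos : ∀ t ∈ Ico p0 pu, 0 < s t := by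
    intro t ht
    have h1 : q t < 0 := hqneg t ⟨hap0.trans ht.1, ht.2⟩
    have h2 : q2 t ≤ 0 := hq2np t ⟨hpl2p0.trans ht.1, ht.2.le⟩
    rw [hs]; dsimp only; linarith
  set afun : ℝ → ℝ := fun t => 2 * c / s t with hafun
  have hacont : ContinuousOn afun (Ico p0 pu) := by
    apply ContinuousOn.div continuousOn_const (hscont.mono Ico_subset_Icc_self)
    intro t ht
    exact (hspos t ht).ne'
  have habound : ∀ t ∈ Ico p0 pu, |afun t| ≤ hfun t := by
    intro t ht
    have h0 : t ∈ Ico a pu := ⟨hap0.trans ht.1, ht.2⟩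
    have h1 : q t < 0 := hqneg t h0
    have h2 : -q t ≤ s t := by
      have := hq2np t ⟨hpl2p0.trans ht.1, ht.2.le⟩
      rw [hs]; dsimp only; linarith
    have h3 : |afun t| = 2 * |c| / s t := by
      rw [hafun]; dsimp only
      rw [abs_div, abs_of_pos (hspos t ht), abs_mul]
      norm_num
    rw [h3]
    calc 2 * |c| / s t ≤ 2 * |c| / (-q t) :=
          div_le_div_of_nonneg_left (by positivity) (by linarith) h2
      _ ≤ hfun t := hfun_bound t h0
  -- integrability of afun
  have haint : ∀ p ∈ Icc p0 pu, IntervalIntegrable afun volume p pu := by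
    intro p hp
    rw [intervalIntegrable_iff_integrableOn_Ioc_of_le hp.2]
    rw [integrableOn_Ioc_iff_integrableOn_Ioo]
    apply MeasureTheory.Integrable.mono' (g := hfun)
    · have : IntervalIntegrable hfun volume p pu := hfun_int.mono_set (by
        rw [uIcc_of_le hp.2, uIcc_of_le hapu.le]
        exact Icc_subset_Icc (hap0.trans hp.1) le_rfl)
      rw [intervalIntegrable_iff_integrableOn_Ioc_of_le hp.2] at this
      exact this.mono_set Ioo_subset_Ioc_self
    · apply (hacont.mono ?_).aestronglyMeasurable measurableSet_Ioo
      exact fun x hx => ⟨hp.1.trans hx.1.le, hx.2⟩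
    · filter_upwards [MeasureTheory.ae_restrict_mem measurableSet_Ioo] with t ht
      exact habound t ⟨hp.1.trans ht.1.le, ht.2⟩
  set A : ℝ → ℝ := fun p => ∫ t in p..pu, afun t with hA
  have hAcont : ContinuousOn A (Icc p0 pu) := by
    have := intervalIntegral.continuousOn_primitive_interval_left
      (f := afun) (μ := volume) (a := p0) (b := pu)
      (by rw [uIcc_of_le hp0pu.le]; exact
        (intervalIntegrable_iff_integrableOn_Icc_of_le hp0pu.le).1 (haint p0 ⟨le_rfl, hp0pu.le⟩))
    rwa [uIcc_of_le hp0pu.le] at this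
  have hAbound : ∀ p ∈ Icc p0 pu, |A p| ≤ A₀ := by
    intro p hp
    have h1 : |A p| ≤ |∫ t in p..pu, hfun t| := by
      rw [hA]; dsimp only
      rw [← Real.norm_eq_abs (∫ t in p..pu, afun t)]
      apply intervalIntegral.norm_integral_le_abs_of_norm_le
      · filter_upwards [MeasureTheory.ae_restrict_mem measurableSet_uIoc] with t ht
        rw [Real.norm_eq_abs]
        rw [uIoc_of_le hp.2] at ht
        rcases eq_or_lt_of_le ht.2 with rfl | hlt
        · have hspu : s t = 0 := by
            rw [hs]; dsimp only; rw [htraj.2.2.1, htraj2.2.2.1]; ring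
          have : afun t = 0 := by rw [hafun]; dsimp only; rw [hspu, div_zero]
          rw [this, abs_zero]
          exact hfun_nn' t ⟨hapu.le, le_rfl⟩
        · exact habound t ⟨hp.1.trans ht.1.le, hlt⟩
      · exact hfun_int.mono_set (by
          rw [uIcc_of_le hp.2, uIcc_of_le hapu.le]
          exact Icc_subset_Icc (hap0.trans hp.1) le_rfl)
    have hint1 : IntervalIntegrable hfun volume a p := hfun_int.mono_set (by
      rw [uIcc_of_le (hap0.trans hp.1), uIcc_of_le hapu.le]
      exact Icc_subset_Icc le_rfl hp.2)
    have hint2 : IntervalIntegrable hfun volume p pu := hfun_int.mono_set (by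
      rw [uIcc_of_le hp.2, uIcc_of_le hapu.le]
      exact Icc_subset_Icc (hap0.trans hp.1) le_rfl)
    have h2 : (∫ t in p..pu, hfun t) ≤ A₀ := by
      rw [hA₀, ← intervalIntegral.integral_add_adjacent_intervals hint1 hint2]
      have h3 : 0 ≤ ∫ t in a..p, hfun t := intervalIntegral.integral_nonneg
        (hap0.trans hp.1) (fun u hu => hfun_nn' u ⟨hu.1, hu.2.trans hp.2⟩)
      linarith
    have h4 : 0 ≤ ∫ t in p..pu, hfun t := intervalIntegral.integral_nonneg
      hp.2 (fun u hu => hfun_nn' u ⟨(hap0.trans hp.1).trans hu.1, hu.2⟩)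
    rw [abs_of_nonneg h4] at h1
    linarith
  -- derivative of A
  have hAderiv : ∀ p ∈ Ioo p0 pu, HasDerivAt A (-(afun p)) p := by
    intro p hp
    apply intervalIntegral.integral_hasDerivAt_left (haint p ⟨hp.1.le, hp.2.le⟩)
    · exact ContinuousOn.stronglyMeasurableAtFilter isOpen_Ioo
        (hacont.mono Ioo_subset_Ico_self) p hp
    · exact (hacont.mono Ioo_subset_Ico_self).continuousAt (Ioo_mem_nhds hp.1 hp.2)
  -- the difference of the squares
  set D : ℝ → ℝ := fun p => q2 p * q2 p - q p * q p with hD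
  have hDcont : ContinuousOn D (Icc p0 pu) := by
    apply ContinuousOn.sub
    · exact ((htraj2.2.1.mono (Icc_subset_Icc hpl2p0 le_rfl))).mul
        ((htraj2.2.1.mono (Icc_subset_Icc hpl2p0 le_rfl)))
    · exact ((htraj.2.1.mono (Icc_subset_Icc (ha1.trans hap0) le_rfl))).mul
        ((htraj.2.1.mono (Icc_subset_Icc (ha1.trans hap0) le_rfl)))
  have hDpu : D pu = 0 := by
    rw [hD]; dsimp only
    rw [htraj.2.2.1, htraj2.2.2.1]; ring
  -- derivative of E := D * exp (A ·), off the stable points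
  set E : ℝ → ℝ := fun p => D p * Real.exp (A p) with hE
  have hEcont : ContinuousOn E (Icc p0 pu) :=
    hDcont.mul (Real.continuous_exp.comp_continuousOn hAcont)
  have hEderiv : ∀ x ∈ Ioo p0 pu, x ∉ StablePts I θ →
      HasDerivAt E (Real.exp (A x) * (2 * (c2 - c) * (-q2 x))) x := by
    intro x hx hxS
    have hx1 : x ∈ Ioo pl pu := ⟨lt_of_le_of_lt (ha1.trans hap0) hx.1, hx.2⟩
    have hx2 : x ∈ Ioo pl2 pu := ⟨lt_of_le_of_lt hpl2p0 hx.1, hx.2⟩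
    have hd1 := traj_Q_deriv htraj hx1 hxS
    have hd2 := traj_Q_deriv htraj2 hx2 hxS
    have hDd : HasDerivAt D (-2 * c2 * q2 x - 2 * f x - (-2 * c * q x - 2 * f x)) x :=
      hd2.sub hd1
    have hEd := hDd.mul ((hAderiv x hx).exp)
    have hsx : s x ≠ 0 := (hspos x ⟨hx.1.le, hx.2⟩).ne'
    refine hEd.congr_deriv ?_
    have hkey : (-2 * c2 * q2 x - 2 * f x - (-2 * c * q x - 2 * f x)) =
        afun x * D x + 2 * (c2 - c) * (-q2 x) := by
      rw [hafun, hD, hs]; dsimp only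
      have hsx' : -q2 x - q x ≠ 0 := hsx
      field_simp
      ring
    rw [hkey]
    ring
  -- E is monotone on [p0, pu]
  have hgnn : ∀ x ∈ Ioo p0 pu, 0 ≤ Real.exp (A x) * (2 * (c2 - c) * (-q2 x)) := by
    intro x hx
    have h1 : q2 x ≤ 0 := hq2np x ⟨hpl2p0.trans hx.1.le, hx.2.le⟩
    have h2 : 0 ≤ 2 * (c2 - c) * (-q2 x) := by nlinarith
    exact mul_nonneg (Real.exp_pos _).le h2
  have hEmono : MonotoneOn E (Icc p0 pu) := by
    apply monotoneOn_of_finite_exceptions (stablePts_finite I θ) p0 pu E _ hEcont hEderiv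
    intro x hx hxS
    exact hgnn x hx
  -- quantitative monotone function
  set B : ℝ := 2 * (c2 - c) * Mq * Real.exp A₀ with hB
  have hBnn : 0 ≤ B := by
    have : 0 ≤ c2 - c := by linarith
    positivity
  have hE2mono : MonotoneOn (fun p => B * p - E p) (Icc p0 pu) := by
    apply monotoneOn_of_finite_exceptions (stablePts_finite I θ) p0 pu _
      (fun x => B - Real.exp (A x) * (2 * (c2 - c) * (-q2 x)))
    · exact (continuous_const.mul continuous_id).continuousOn.sub hEcont
    · intro x hx hxS
      have hid : HasDerivAt (fun p : ℝ => B * p) B x := by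
        simpa using (hasDerivAt_id x).const_mul B
      exact hid.sub (hEderiv x hx hxS)
    · intro x hx hxS
      have h1 : -q2 x ≤ Mq := hMq x ⟨hpl2p0.trans hx.1.le, hx.2.le⟩
      have h2 : Real.exp (A x) ≤ Real.exp A₀ := by
        apply Real.exp_le_exp.2
        have := hAbound x ⟨hx.1.le, hx.2.le⟩
        have := le_abs_self (A x)
        linarith
      have h3 : 0 ≤ -q2 x := by
        have := hq2np x ⟨hpl2p0.trans hx.1.le, hx.2.le⟩; linarith
      have h4 : 0 ≤ c2 - c := by linarith
      have h5 : Real.exp (A x) * (2 * (c2 - c) * (-q2 x)) ≤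
          Real.exp A₀ * (2 * (c2 - c) * Mq) :=
        mul_le_mul h2 (by nlinarith) (by nlinarith) (Real.exp_pos A₀).le
      have h6 : B = Real.exp A₀ * (2 * (c2 - c) * Mq) := by first | (simp only [hB]; ring) | simp only [hB]
      linarith
  -- conclusions
  intro p hp
  have hEle : E p ≤ E pu := hEmono hp ⟨hp0pu.le, le_rfl⟩ hp.2
  have hApu : A pu = 0 := by
    rw [hA]; dsimp only; exact intervalIntegral.integral_same
  have hEpu : E pu = 0 := by rw [hE]; dsimp only; rw [hDpu]; ring
  have hexpA : 0 < Real.exp (A p) := Real.exp_pos _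
  have hDle : D p ≤ 0 := by
    rw [hEpu] at hEle
    rw [hE] at hEle; dsimp only at hEle
    nlinarith
  constructor
  · rw [hD] at hDle; dsimp only at hDle; linarith
  · have hE2 := hE2mono hp ⟨hp0pu.le, le_rfl⟩ hp.2
    dsimp only at hE2
    rw [hEpu] at hE2
    -- B p - E p ≤ B pu  ⇒  -E p ≤ B (pu - p)
    have h6 : -E p ≤ B * (pu - p) := by nlinarith
    have h7 : -D p * Real.exp (A p) ≤ B * (pu - p) := by
      rw [hE] at h6; dsimp only at h6; linarith [h6]
    have h8 : Real.exp (-(A p)) ≤ Real.exp A₀ := by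
      apply Real.exp_le_exp.2
      have := hAbound p hp
      have := neg_abs_le (A p)
      linarith
    have h9 : 0 ≤ pu - p ∧ pu - p ≤ pu := by
      constructor
      · linarith [hp.2]
      · have : 0 ≤ p := ha0.trans (hap0.trans hp.1)
        linarith
    have h10 : -D p ≤ B * (pu - p) * Real.exp (-(A p)) := by
      have hh : -D p = (-D p * Real.exp (A p)) * Real.exp (-(A p)) := by
        rw [mul_assoc, ← Real.exp_add]
        simp
      rw [hh]
      apply mul_le_mul_of_nonneg_right h7 (Real.exp_pos _).le
    have hpu0 : 0 ≤ pu := ha0.trans hapu.le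
    have h11 : B * (pu - p) * Real.exp (-(A p)) ≤ B * pu * Real.exp A₀ := by
      apply mul_le_mul (by nlinarith) h8 (Real.exp_pos _).le (mul_nonneg hBnn hpu0)
    have h12 : -D p ≤ 2 * (c2 - c) * Mq * Real.exp A₀ * pu * Real.exp A₀ := by
      calc -D p ≤ B * (pu - p) * Real.exp (-(A p)) := h10
        _ ≤ B * pu * Real.exp A₀ := h11
        _ = 2 * (c2 - c) * Mq * Real.exp A₀ * pu * Real.exp A₀ := by first | (simp only [hB]; ring) | simp only [hB]
    rw [hD] at h12; dsimp only at h12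
    calc q p * q p - q2 p * q2 p = -(q2 p * q2 p - q p * q p) := by ring
      _ ≤ 2 * (c2 - c) * Mq * Real.exp A₀ * pu * Real.exp A₀ := h12
      _ = 2 * Mq * Real.exp A₀ * Real.exp A₀ * pu * (c2 - c) := by ring

set_option maxHeartbeats 2000000 in
/-- continuity of the trajectories with respect to the speed, from above:
for a decreasing sequence `cₙ → c`, the terminal points converge, the trajectories
converge locally uniformly, and the terminal values converge. -/
theorem stmt18 (f : ℝ → ℝ) (I : ℕ) (θ : ℕ → ℝ)
    (hH1 : H1 f I θ) (hH2 : H2 f I θ) (hH3 : H3 f I θ)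
    (pu : ℝ) (hpu : pu ∈ StablePts I θ) (hpupos : 0 < pu)
    (c : ℝ) (cn : ℕ → ℝ) (hdec : StrictAnti cn) (hlim : Tendsto cn atTop (𝓝 c))
    (pl : ℝ) (q : ℝ → ℝ) (htraj : Traj f I θ c pu pl q)
    (pln : ℕ → ℝ) (qn : ℕ → ℝ → ℝ)
    (htrajn : ∀ n : ℕ, Traj f I θ (cn n) pu (pln n) (qn n)) :
    Tendsto pln atTop (𝓝 pl) ∧
    TendstoLocallyUniformlyOn qn q atTop (Ioo pl pu) ∧
    Tendsto (fun n => qn n (pln n)) atTop (𝓝 (q pl)) := by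
  have hpl0 : 0 ≤ pl := htraj.1.1
  have hplpu : pl < pu := htraj.1.2
  -- speeds
  have hcnlt : ∀ n, c < cn n := by
    intro n
    have h1 : cn (n + 1) < cn n := hdec (Nat.lt_succ_self n)
    have h2 : c ≤ cn (n + 1) := by
      apply le_of_tendsto hlim
      filter_upwards [eventually_ge_atTop (n + 1)] with m hm
      exact hdec.antitone hm
    linarith
  set C : ℝ := |c| ⊔ |cn 0| with hC
  have hC0 : 0 ≤ C := le_trans (abs_nonneg c) (le_max_left _ _)
  have hCc : |c| ≤ C := le_max_left _ _
  have hCn : ∀ n, |cn n| ≤ C := by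
    intro n
    rw [abs_le]
    constructor
    · have := neg_abs_le c
      have := hcnlt n
      have := hCc
      linarith
    · have h1 : cn n ≤ cn 0 := hdec.antitone (Nat.zero_le n)
      have := le_abs_self (cn 0)
      have := le_max_right |c| |cn 0|
      linarith
  -- bound for f
  obtain ⟨F₀, hF₀0, hF⟩ := f_bounded hH2 hH3 pu
  set K₀ : ℝ := (C ^ 2 + 2 * F₀) * Real.exp pu with hK₀
  have hK₀0 : 0 ≤ K₀ := by positivity
  -- δ near pu
  obtain ⟨Lm, hLm0, hδgen⟩ := near_pu_delta hH3 hpu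
  set ε₀ : ℝ := Lm / (4 * (C + 1)) with hε₀
  have hε₀pos : 0 < ε₀ := by positivity
  obtain ⟨δ, hδ0, hδη, hSfree, hfLm⟩ :=
    hδgen (min (ε₀ ^ 2 / (K₀ + 1)) ((pu - pl) / 2)) (lt_min (by positivity) (by linarith))
  have hδpl : δ < pu - pl := by
    have h1 := hδη.trans (min_le_right _ _)
    linarith
  have hδpu' : δ ≤ pu := by linarith
  have hKδ : K₀ * δ ≤ ε₀ ^ 2 := by
    have h1 := hδη.trans (min_le_left _ _)
    have h2 : K₀ * δ ≤ K₀ * (ε₀ ^ 2 / (K₀ + 1)) := by nlinarith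
    have h3 : K₀ * (ε₀ ^ 2 / (K₀ + 1)) ≤ ε₀ ^ 2 := by
      rw [mul_div_assoc']
      rw [div_le_iff₀ (by positivity)]
      nlinarith [sq_nonneg ε₀]
    linarith
  have hplpuδ : pl < pu - δ := by linarith
  -- self bounds
  have hsb := traj_sq_bound htraj hCc hF₀0 hF
  have hsbn := fun n => traj_sq_bound (htrajn n) (hCn n) hF₀0 hF
  have hsmall : ∀ (pl' : ℝ) (q' : ℝ → ℝ),
      (∀ p ∈ Icc pl' pu, q' p * q' p ≤ K₀ * (pu - p)) →
      ∀ p ∈ Ioo (pu - δ) pu, p ∈ Icc pl' pu → q' p * q' p ≤ ε₀ ^ 2 := by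
    intro pl' q' hb p hp hp'
    have h1 := hb p hp'
    have h2 : K₀ * (pu - p) ≤ K₀ * δ := by nlinarith [hp.1, hp.2]
    linarith
  obtain ⟨-, hQlow⟩ := traj_near_pu htraj hCc hLm0 hδ0 hδpu'
    (fun s hs hsI => (hSfree s hs) hsI) hfLm (hsmall pl q hsb)
  have hplnδ : ∀ n, pln n ≤ pu - δ := fun n =>
    (traj_near_pu (htrajn n) (hCn n) hLm0 hδ0 hδpu'
      (fun s hs hsI => (hSfree s hs) hsI) hfLm (hsmall (pln n) (qn n) (hsbn n))).1
  -- uniform bound for -qn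
  set Mq : ℝ := Real.sqrt (K₀ * pu) with hMq
  have hMq0 : 0 ≤ Mq := Real.sqrt_nonneg _
  have hMqn : ∀ n, ∀ p ∈ Icc (pln n) pu, -(qn n p) ≤ Mq := by
    intro n p hp
    have h1 := hsbn n p hp
    rw [← hK₀] at h1
    have h2 : K₀ * (pu - p) ≤ K₀ * pu := by
      have := (htrajn n).1.1
      nlinarith [hp.1]
    rw [hMq]
    rw [show -(qn n p) = Real.sqrt ((-(qn n p)) * (-(qn n p))) from
      (Real.sqrt_mul_self (by linarith [traj_nonpos (htrajn n) p hp])).symm]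
    apply Real.sqrt_le_sqrt
    have h3 : (-(qn n p)) * (-(qn n p)) = qn n p * qn n p := by ring
    linarith
  -- wrapper around the key comparison
  have hkey : ∀ a : ℝ, pl ≤ a → a ≤ pu - δ → (∀ p ∈ Icc a (pu - δ), q p < 0) →
      ∃ M : ℝ, 0 ≤ M ∧ ∀ n, ∀ p0, a ≤ p0 → pln n ≤ p0 → p0 < pu →
        ∀ p ∈ Icc p0 pu, qn n p * qn n p ≤ q p * q p ∧
          q p * q p - qn n p * qn n p ≤ M * (cn n - c) := by
    intro a ha1 ha2 hqa
    obtain ⟨M, hM0, hMp⟩ := key_comparison htraj hLm0 hδ0 hplpuδ hQlow ha1 ha2 hqa hMq0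
    exact ⟨M, hM0, fun n => hMp (cn n) (pln n) (qn n) (htrajn n) (hcnlt n).le (hMqn n)⟩
  have hqa_of : ∀ a : ℝ, pl < a → ∀ p ∈ Icc a (pu - δ), q p < 0 := by
    intro a ha p hp
    exact htraj.2.2.2.1 p ⟨lt_of_lt_of_le ha hp.1, lt_of_le_of_lt hp.2 (by linarith)⟩
  -- pointwise comparison up to the left endpoint
  have hptwise : ∀ n, ∀ p, pl < p → p ≤ pu - δ → pln n ≤ p →
      qn n p * qn n p ≤ q p * q p := by
    intro n p h1 h2 h3
    obtain ⟨M, hM0, hMp⟩ := hkey p h1.le h2 (hqa_of p h1)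
    exact (hMp n p le_rfl h3 (by linarith) p ⟨le_rfl, by linarith⟩).1
  have hlimQ : ∀ n, pln n ≤ pl → qn n pl * qn n pl ≤ q pl * q pl := by
    intro n hn
    set g : ℝ → ℝ := fun p => qn n p * qn n p - q p * q p with hg
    have hgc : ContinuousWithinAt g (Ioc pl (pu - δ)) pl := by
      apply ContinuousWithinAt.mono (t := Icc pl pu)
      · apply ContinuousWithinAt.sub
        · have hc := (htrajn n).2.1
          have h1 : ContinuousWithinAt (qn n) (Icc (pln n) pu) pl :=
            hc.continuousWithinAt ⟨hn, hplpu.le⟩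
          exact (h1.mono (Icc_subset_Icc hn le_rfl)).mul
            (h1.mono (Icc_subset_Icc hn le_rfl))
        · have h1 : ContinuousWithinAt q (Icc pl pu) pl :=
            htraj.2.1.continuousWithinAt ⟨le_rfl, hplpu.le⟩
          exact h1.mul h1
      · exact fun x hx => ⟨hx.1.le, hx.2.trans (by linarith)⟩
    haveI : (𝓝[Ioc pl (pu - δ)] pl).NeBot := by
      rw [nhdsWithin_Ioc_eq_nhdsGT hplpuδ]
      infer_instance
    have hev : ∀ᶠ p in 𝓝[Ioc pl (pu - δ)] pl, g p ≤ 0 := by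
      filter_upwards [self_mem_nhdsWithin] with p hp
      have := hptwise n p hp.1 hp.2 (hn.trans hp.1.le)
      rw [hg]; dsimp only; linarith
    have := le_of_tendsto hgc hev
    rw [hg] at this; dsimp only at this; linarith
  -- lower bound for pln
  have hplnge : ∀ n, pl ≤ pln n := by
    intro n
    rcases hpl0.eq_or_lt with h0 | h0
    · rw [← h0]; exact (htrajn n).1.1
    · by_contra hcon
      push_neg at hcon
      have h1 : q pl = 0 := htraj.2.2.2.2.2.1 h0
      have h2 := hlimQ n hcon.le
      rw [h1] at h2
      have h3 : qn n pl < 0 := (htrajn n).2.2.2.1 pl ⟨hcon, hplpu⟩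
      nlinarith
  -- eventually pln n < a
  have haux : ∀ a : ℝ, pl < a → a ≤ pu - δ → ∀ᶠ n in atTop, pln n < a := by
    intro a ha1 ha2
    obtain ⟨M, hM0, hMp⟩ := hkey a ha1.le ha2 (hqa_of a ha1)
    obtain ⟨x₁, hx₁, hmin⟩ := isCompact_Icc.exists_isMinOn (nonempty_Icc.2 ha2)
      ((htraj.2.1.mono (Icc_subset_Icc ha1.le (by linarith))).mul
        (htraj.2.1.mono (Icc_subset_Icc ha1.le (by linarith))))
    set m₁ : ℝ := q x₁ * q x₁ with hm₁
    have hm₁pos : 0 < m₁ := by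
      have := hqa_of a ha1 x₁ hx₁
      nlinarith
    have hev : ∀ᶠ n in atTop, M * (cn n - c) < m₁ := by
      have h1 : Tendsto (fun n => M * (cn n - c)) atTop (𝓝 0) := by
        have := (hlim.sub_const c).const_mul M
        simpa using this
      exact h1.eventually (gt_mem_nhds hm₁pos)
    filter_upwards [hev] with n hn
    by_contra hcon
    push_neg at hcon
    have h0ln : 0 < pln n := by linarith
    have hq0 : qn n (pln n) = 0 := (htrajn n).2.2.2.2.2.1 h0ln
    have h4 := (hMp n (pln n) hcon le_rfl ((htrajn n).1.2) (pln n)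
      ⟨le_rfl, ((htrajn n).1.2).le⟩).2
    rw [hq0] at h4
    have h5 : m₁ ≤ q (pln n) * q (pln n) := hmin ⟨hcon, hplnδ n⟩
    nlinarith
  -- first conclusion
  have hconc1 : Tendsto pln atTop (𝓝 pl) := by
    rw [tendsto_order]
    constructor
    · intro x hx
      filter_upwards with n
      exact lt_of_lt_of_le hx (hplnge n)
    · intro x hx
      have ha1 : pl < min x (pu - δ) := lt_min hx hplpuδ
      filter_upwards [haux (min x (pu - δ)) ha1 (min_le_right _ _)] with n hn
      exact lt_of_lt_of_le hn (min_le_left _ _)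
  refine ⟨hconc1, ?_, ?_⟩
  -- second conclusion: locally uniform convergence
  · rw [tendstoLocallyUniformlyOn_iff_forall_isCompact isOpen_Ioo]
    intro K hK hKc
    rcases K.eq_empty_or_nonempty with rfl | hKne
    · exact tendstoUniformlyOn_empty
    have haK : sInf K ∈ K := hKc.sInf_mem hKne
    have hbK : sSup K ∈ K := hKc.sSup_mem hKne
    set a' : ℝ := sInf K with ha'
    set b' : ℝ := sSup K with hb'
    have hsub : K ⊆ Icc a' b' := fun x hx =>
      ⟨csInf_le hKc.bddBelow hx, le_csSup hKc.bddAbove hx⟩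
    have ha'mem : a' ∈ Ioo pl pu := hK haK
    have hb'mem : b' ∈ Ioo pl pu := hK hbK
    set a : ℝ := min a' (pu - δ) with ha
    have ha1 : pl < a := lt_min ha'mem.1 hplpuδ
    obtain ⟨M, hM0, hMp⟩ := hkey a ha1.le (min_le_right _ _) (hqa_of a ha1)
    have ha'b' : a' ≤ b' := csInf_le_csSup hKne hKc.bddBelow hKc.bddAbove
    obtain ⟨x₂, hx₂, hmin2⟩ := isCompact_Icc.exists_isMinOn (nonempty_Icc.2 ha'b')
      ((htraj.2.1.mono (Icc_subset_Icc ha'mem.1.le hb'mem.2.le)).neg)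
    set m : ℝ := -q x₂ with hm
    have hmpos : 0 < m := by
      have := htraj.2.2.2.1 x₂ ⟨lt_of_lt_of_le ha'mem.1 hx₂.1, lt_of_le_of_lt hx₂.2 hb'mem.2⟩
      rw [hm]; linarith
    rw [Metric.tendstoUniformlyOn_iff]
    intro ε hε
    have hev2 : ∀ᶠ n in atTop, M * (cn n - c) < ε * m := by
      have h1 : Tendsto (fun n => M * (cn n - c)) atTop (𝓝 0) := by
        have := (hlim.sub_const c).const_mul M
        simpa using this
      exact h1.eventually (gt_mem_nhds (by positivity))
    filter_upwards [haux a ha1 (min_le_right _ _), hev2] with n h1 h2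
    intro x hx
    have hxab : x ∈ Icc a' b' := hsub hx
    have hxmem : x ∈ Icc a pu :=
      ⟨le_trans (min_le_left _ _) hxab.1, hxab.2.trans hb'mem.2.le⟩
    obtain ⟨hc1, hc2⟩ := hMp n a le_rfl h1.le (lt_of_le_of_lt (min_le_right _ _) (by linarith)) x hxmem
    rw [Real.dist_eq]
    set u : ℝ := q x with hu
    set v : ℝ := qn n x with hv
    have hum : u ≤ -m := by
      have hle : -q x₂ ≤ -q x := hmin2 hxab
      rw [hu, hm]; linarith
    have hv0 : v ≤ 0 := traj_nonpos (htrajn n) x ⟨le_trans h1.le hxmem.1, hxmem.2⟩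
    have e2 : |(u - v) * (u + v)| = u * u - v * v := by
      rw [abs_of_nonneg (by nlinarith)]; ring
    have e3 : |u - v| * (-(u + v)) = |(u - v) * (u + v)| := by
      rw [abs_mul, abs_of_nonpos (show u + v ≤ 0 by linarith)]
    have e1 : |u - v| * m ≤ |u - v| * (-(u + v)) :=
      mul_le_mul_of_nonneg_left (by linarith) (abs_nonneg _)
    have e4 : |u - v| * m < ε * m := by
      rw [e3, e2] at e1
      linarith
    exact (mul_lt_mul_iff_left₀ hmpos).1 e4
  -- third conclusion
  · rcases hpl0.eq_or_lt with h0 | h0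
    · -- pl = 0
      subst h0
      have hq00 : q 0 ≤ 0 := htraj.2.2.2.2.2.2 rfl
      rcases eq_or_lt_of_le hq00 with heq | hlt
      · -- q 0 = 0 : the sequence is constant 0
        have hall : ∀ n, qn n (pln n) = 0 := by
          intro n
          rcases ((htrajn n).1.1 : 0 ≤ pln n).eq_or_lt with heq2 | hpos
          · have h2 := hlimQ n (le_of_eq heq2.symm)
            rw [heq] at h2
            have h4 : qn n 0 = 0 := mul_self_eq_zero.1
              (le_antisymm (by nlinarith) (mul_self_nonneg _))
            rw [← heq2]
            exact h4
          · exact (htrajn n).2.2.2.2.2.1 hpos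
        have hfe : (fun n => qn n (pln n)) = fun _ => (0:ℝ) := funext hall
        rw [hfe, heq]
        exact tendsto_const_nhds
      · -- q 0 < 0
        have hqa0 : ∀ p ∈ Icc (0:ℝ) (pu - δ), q p < 0 := by
          intro p hp
          rcases hp.1.eq_or_lt with heq2 | hpos
          · rw [← heq2]; exact hlt
          · exact htraj.2.2.2.1 p ⟨hpos, lt_of_le_of_lt hp.2 (by linarith)⟩
        obtain ⟨M, hM0, hMp⟩ := hkey 0 le_rfl (by linarith) hqa0
        obtain ⟨x₃, hx₃, hmin3⟩ := isCompact_Icc.exists_isMinOn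
          (nonempty_Icc.2 (by linarith : (0:ℝ) ≤ pu - δ))
          ((htraj.2.1.mono (Icc_subset_Icc le_rfl (by linarith))).mul
            (htraj.2.1.mono (Icc_subset_Icc le_rfl (by linarith))))
        have hm₂pos : 0 < q x₃ * q x₃ := by
          have := hqa0 x₃ hx₃
          nlinarith
        have hevm₂ : ∀ᶠ n in atTop, M * (cn n - c) < q x₃ * q x₃ := by
          have h1 : Tendsto (fun n => M * (cn n - c)) atTop (𝓝 0) := by
            have := (hlim.sub_const c).const_mul M
            simpa using this
          exact h1.eventually (gt_mem_nhds hm₂pos)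
        have hevp : ∀ᶠ n in atTop, pln n = 0 := by
          filter_upwards [hevm₂] with n hn
          by_contra hcon
          have hpos : 0 < pln n := lt_of_le_of_ne ((htrajn n).1.1) (Ne.symm hcon)
          have hq0' : qn n (pln n) = 0 := (htrajn n).2.2.2.2.2.1 hpos
          have h4 := (hMp n (pln n) hpos.le le_rfl ((htrajn n).1.2) (pln n)
            ⟨le_rfl, ((htrajn n).1.2).le⟩).2
          rw [hq0'] at h4
          have h5 : q x₃ * q x₃ ≤ q (pln n) * q (pln n) := hmin3 ⟨hpos.le, hplnδ n⟩
          nlinarith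
        rw [Metric.tendsto_nhds]
        intro ε hε
        have hm₃pos : 0 < -q 0 := by linarith
        have hevε : ∀ᶠ n in atTop, M * (cn n - c) < ε * (-q 0) := by
          have h1 : Tendsto (fun n => M * (cn n - c)) atTop (𝓝 0) := by
            have := (hlim.sub_const c).const_mul M
            simpa using this
          exact h1.eventually (gt_mem_nhds (by positivity))
        filter_upwards [hevp, hevε] with n hn1 hn2
        obtain ⟨hc1, hc2⟩ := hMp n 0 le_rfl (le_of_eq hn1) hpupos 0
          ⟨le_rfl, hpupos.le⟩
        rw [hn1, Real.dist_eq]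
        have hv0 : qn n 0 ≤ 0 := (htrajn n).2.2.2.2.2.2 hn1
        have e2 : |(qn n 0 - q 0) * (qn n 0 + q 0)| = q 0 * q 0 - qn n 0 * qn n 0 := by
          rw [abs_of_nonpos (by nlinarith)]; ring
        have e3 : |qn n 0 - q 0| * (-(qn n 0 + q 0)) = |(qn n 0 - q 0) * (qn n 0 + q 0)| := by
          rw [abs_mul, abs_of_nonpos (show qn n 0 + q 0 ≤ 0 by linarith)]
        have e1 : |qn n 0 - q 0| * (-q 0) ≤ |qn n 0 - q 0| * (-(qn n 0 + q 0)) :=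
          mul_le_mul_of_nonneg_left (by linarith) (abs_nonneg _)
        have e4 : |qn n 0 - q 0| * (-q 0) < ε * (-q 0) := by
          rw [e3, e2] at e1
          linarith
        exact (mul_lt_mul_iff_left₀ hm₃pos).1 e4
    · -- pl > 0
      have hall : ∀ n, qn n (pln n) = 0 := fun n =>
        (htrajn n).2.2.2.2.2.1 (lt_of_lt_of_le h0 (hplnge n))
      have hqpl : q pl = 0 := htraj.2.2.2.2.2.1 h0
      have hfe : (fun n => qn n (pln n)) = fun _ => (0:ℝ) := funext hall
      rw [hfe, hqpl]
      exact tendsto_const_nhds
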